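/- arXiv:2210.01577 — 2 statements merged into one kernel-verified Lean document; each statement's English description precedes it below -/
import Mathlib

section
/- Let Γ be the triangle group ⟨β₁, β₂, β₃ : β₁² = β₂⁴ = β₃^{4n} = β₁β₂β₃ = 1⟩ for n ≥ 2. Then for every pair (k, r) with k even, 0 ≤ k < 4n, 0 ≤ r < 4n and gcd(r, 4n) = 1, the assignment β₁ ↦ x^k y, β₂ ↦ y x^{-(k+r)}, β₃ ↦ x^r defines a surjective homomorphism θ_{k,r} : Γ → G_n whose kernel is torsion-free, and every epimorphism Γ → G_n with torsion-free kernel is of this form. -/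
/-- Relations of the generalized quasi-dihedral group
`G_n = ⟨x, y : x^(4n) = y^2 = 1, y x y = x^(2n-1)⟩`. -/
def qdRel (n : ℕ) : Set (FreeGroup (Fin 2)) :=
  { FreeGroup.of 0 ^ (4 * n),
    FreeGroup.of 1 ^ 2,
    FreeGroup.of 1 * FreeGroup.of 0 * FreeGroup.of 1 * (FreeGroup.of 0 ^ (2 * n - 1))⁻¹ }

/-- The generalized quasi-dihedral group of order `8n`. -/
def G (n : ℕ) : Type := PresentedGroup (qdRel n)

instance (n : ℕ) : Group (G n) := by unfold G; infer_instance

/-- The generator `x` of `G n`. -/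
def x (n : ℕ) : G n := PresentedGroup.of 0

/-- The generator `y` of `G n`. -/
def y (n : ℕ) : G n := PresentedGroup.of 1

/-- Relations of the triangle group `⟨β₁, β₂, β₃ : β₁² = β₂⁴ = β₃^(4n) = β₁β₂β₃ = 1⟩`. -/
def triRel (n : ℕ) : Set (FreeGroup (Fin 3)) :=
  { FreeGroup.of 0 ^ 2, FreeGroup.of 1 ^ 4, FreeGroup.of 2 ^ (4 * n),
    FreeGroup.of 0 * FreeGroup.of 1 * FreeGroup.of 2 }

/-- The `(2, 4, 4n)` triangle group. -/
def Tri (n : ℕ) : Type := PresentedGroup (triRel n)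

instance (n : ℕ) : Group (Tri n) := by unfold Tri; infer_instance

def b₁ (n : ℕ) : Tri n := PresentedGroup.of 0
def b₂ (n : ℕ) : Tri n := PresentedGroup.of 1
def b₃ (n : ℕ) : Tri n := PresentedGroup.of 2


/-- The concrete quasidihedral model: pairs (a, e) with twisted multiplication. -/
structure Cn (n : ℕ) where
  a : ZMod (4 * n)
  e : ZMod 2

namespace Cn

variable {n : ℕ}

/-- twisting unit -/
def u (n : ℕ) (e : ZMod 2) : ZMod (4 * n) := if e = 0 then 1 else (2 * n - 1 : ZMod (4 * n))

lemma tw_sq : ((2 * n - 1 : ZMod (4 * n))) * (2 * n - 1) = 1 := by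
  have h : ((4 * n : ℕ) : ZMod (4 * n)) = 0 := ZMod.natCast_self _
  push_cast at h
  linear_combination ((n : ZMod (4 * n)) - 1) * h

lemma u_mul (e f : ZMod 2) : u n e * u n f = u n (e + f) := by
  rcases (by decide : ∀ e : ZMod 2, e = 0 ∨ e = 1) e with rfl | rfl <;> rcases (by decide : ∀ e : ZMod 2, e = 0 ∨ e = 1) f with rfl | rfl <;> simp [u, tw_sq, show (1+1 : ZMod 2) = 0 from rfl]

instance : Mul (Cn n) := ⟨fun p q => ⟨p.a + u n p.e * q.a, p.e + q.e⟩⟩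
instance : One (Cn n) := ⟨⟨0, 0⟩⟩
instance : Inv (Cn n) := ⟨fun p => ⟨-(u n p.e * p.a), p.e⟩⟩

lemma mul_def (p q : Cn n) : p * q = ⟨p.a + u n p.e * q.a, p.e + q.e⟩ := rfl
lemma one_def : (1 : Cn n) = ⟨0, 0⟩ := rfl

lemma u_zero : u n 0 = 1 := by simp [u]

lemma e_add_self (e : ZMod 2) : e + e = 0 := by fin_cases e <;> rfl

instance : Group (Cn n) :=
  Group.ofLeftAxioms
    (fun p q r => by
      simp only [mul_def]
      refine congrArg₂ Cn.mk ?_ (add_assoc _ _ _)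
      rw [← u_mul]; ring)
    (fun p => by simp [mul_def, one_def, u_zero])
    (fun p => by
      show (⟨-(u n p.e * p.a), p.e⟩ : Cn n) * p = 1
      simp only [mul_def, one_def]
      exact congrArg₂ Cn.mk (by ring) (e_add_self p.e))

lemma xpow (m : ℕ) : (⟨1, 0⟩ : Cn n) ^ m = ⟨(m : ZMod (4 * n)), 0⟩ := by
  induction m with
  | zero => simp [one_def]
  | succ m ih => rw [pow_succ, ih, mul_def]; simp only [u_zero, one_mul]; congr 1 <;> push_cast <;> ring

lemma ypow (m : ℕ) : (⟨0, 1⟩ : Cn n) ^ m = ⟨0, (m : ZMod 2)⟩ := by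
  induction m with
  | zero => simp [one_def]
  | succ m ih => rw [pow_succ, ih, mul_def]; simp

end Cn

/-! ### Relations in `G n` -/

section Gfacts

variable (n : ℕ)

lemma mem_qd1 : (FreeGroup.of 0 : FreeGroup (Fin 2)) ^ (4 * n) ∈ qdRel n := by
  simp [qdRel]

lemma mem_qd2 : (FreeGroup.of 1 : FreeGroup (Fin 2)) ^ 2 ∈ qdRel n := by
  simp [qdRel]

lemma mem_qd3 : (FreeGroup.of 1 * FreeGroup.of 0 * FreeGroup.of 1 *
    ((FreeGroup.of 0 : FreeGroup (Fin 2)) ^ (2 * n - 1))⁻¹) ∈ qdRel n := by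
  simp [qdRel]

lemma rel_one {w : FreeGroup (Fin 2)} (hw : w ∈ qdRel n) :
    PresentedGroup.mk (qdRel n) w = 1 :=
  (QuotientGroup.eq_one_iff _).mpr (Subgroup.subset_normalClosure hw)

lemma x_pow_4n : x n ^ (4 * n) = 1 := by
  have := rel_one n (mem_qd1 n)
  rw [map_pow] at this
  exact this

lemma y_sq : y n * y n = 1 := by
  have := rel_one n (mem_qd2 n)
  rw [map_pow, sq] at this
  exact this

lemma y_inv : (y n)⁻¹ = y n := inv_eq_of_mul_eq_one_right (y_sq n)

lemma yxy : y n * x n * y n = x n ^ (2 * n - 1) := by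
  have := rel_one n (mem_qd3 n)
  rw [map_mul, map_mul, map_mul, map_inv, map_pow] at this
  exact mul_inv_eq_one.mp this

lemma y_x : y n * x n = x n ^ (2 * n - 1) * y n := by
  rw [← yxy n, mul_assoc, mul_assoc, y_sq n, mul_one]

lemma y_x_pow (b : ℕ) : y n * x n ^ b = x n ^ (b * (2 * n - 1)) * y n := by
  induction b with
  | zero => simp
  | succ b ih =>
    rw [pow_succ, ← mul_assoc, ih, mul_assoc, y_x n, ← mul_assoc, ← pow_add]
    ring_nf

lemma ypow_x_pow (e b : ℕ) :
    y n ^ e * x n ^ b = x n ^ (b * (2 * n - 1) ^ e) * y n ^ e := by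
  induction e generalizing b with
  | zero => simp
  | succ e ih =>
    rw [pow_succ, mul_assoc, y_x_pow n, ← mul_assoc, ih, mul_assoc, ← pow_succ,
      show b * (2 * n - 1) * (2 * n - 1) ^ e = b * (2 * n - 1) ^ (e + 1) by ring]

lemma inv_x_pow (hn : 0 < n) (a : ℕ) : (x n ^ a)⁻¹ = x n ^ (a * (4 * n - 1)) :=
  (inv_eq_of_mul_eq_one_right (by
    rw [← pow_add]
    have h : a + a * (4 * n - 1) = (4 * n) * a := by
      have h1 : 4 * n - 1 + 1 = 4 * n := by omega
      calc a + a * (4 * n - 1) = a * ((4 * n - 1) + 1) := by ring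
      _ = (4 * n) * a := by rw [h1]; ring
    rw [h, pow_mul, x_pow_4n n, one_pow]))

lemma closure_xy : Subgroup.closure ({x n, y n} : Set (G n)) = ⊤ := by
  refine Eq.trans ?_ (PresentedGroup.closure_range_of (qdRel n))
  congr 1
  ext g
  constructor
  · rintro (rfl | rfl)
    exacts [⟨0, rfl⟩, ⟨1, rfl⟩]
  · rintro ⟨i, rfl⟩
    fin_cases i
    exacts [Or.inl rfl, Or.inr rfl]

lemma normal_form (hn : 0 < n) (g : G n) : ∃ a e : ℕ, g = x n ^ a * y n ^ e := by
  have htop := closure_xy n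
  have hg : g ∈ Subgroup.closure ({x n, y n} : Set (G n)) := htop ▸ Subgroup.mem_top g
  induction hg using Subgroup.closure_induction with
  | mem z hz =>
    rcases hz with rfl | rfl
    · exact ⟨1, 0, by simp⟩
    · exact ⟨0, 1, by simp⟩
  | one => exact ⟨0, 0, by simp⟩
  | mul p q _ _ hp hq =>
    obtain ⟨a, e, rfl⟩ := hp
    obtain ⟨b, f, rfl⟩ := hq
    refine ⟨a + b * (2 * n - 1) ^ e, e + f, ?_⟩
    rw [mul_assoc, ← mul_assoc (y n ^ e), ypow_x_pow n, pow_add, pow_add]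
    group
  | inv p _ hp =>
    obtain ⟨a, e, rfl⟩ := hp
    refine ⟨a * (4 * n - 1) * (2 * n - 1) ^ e, e, ?_⟩
    rw [mul_inv_rev, ← inv_pow, y_inv n, inv_x_pow n hn, ypow_x_pow n]

end Gfacts

/-! ### The comparison homomorphism `φ : G n →* Cn n` -/

section Phi

variable (n : ℕ)

def phiGen : Fin 2 → Cn n := ![⟨1, 0⟩, ⟨0, 1⟩]

lemma phi_rels (hn : 0 < n) : ∀ r ∈ qdRel n, FreeGroup.lift (phiGen n) r = 1 := by
  intro r hr
  have h0 : FreeGroup.lift (phiGen n) (FreeGroup.of 0) = (⟨1, 0⟩ : Cn n) := by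
    rw [FreeGroup.lift_apply_of]; rfl
  have h1 : FreeGroup.lift (phiGen n) (FreeGroup.of 1) = (⟨0, 1⟩ : Cn n) := by
    rw [FreeGroup.lift_apply_of]; rfl
  rcases hr with rfl | rfl | rfl
  · rw [map_pow, h0, Cn.xpow]
    rw [Cn.one_def, ZMod.natCast_self]
  · rw [map_pow, h1, sq, Cn.mul_def, Cn.one_def]
    congr 1
    simp [Cn.u]
  · rw [map_mul, map_mul, map_mul, map_inv, map_pow, h0, h1, Cn.xpow,
      mul_inv_eq_one, Cn.mul_def, Cn.mul_def]
    have hc : ((2 * n - 1 : ℕ) : ZMod (4 * n)) = 2 * (n : ZMod (4 * n)) - 1 := by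
      have h1n : 1 ≤ 2 * n := by omega
      push_cast [Nat.cast_sub h1n]
      ring
    rw [hc]
    congr 1
    simp [Cn.u]

def phi (hn : 0 < n) : G n →* Cn n := PresentedGroup.toGroup (phi_rels n hn)

lemma phi_x (hn : 0 < n) : phi n hn (x n) = ⟨1, 0⟩ := PresentedGroup.toGroup.of _

lemma phi_y (hn : 0 < n) : phi n hn (y n) = ⟨0, 1⟩ := PresentedGroup.toGroup.of _

lemma phi_form (hn : 0 < n) (a e : ℕ) :
    phi n hn (x n ^ a * y n ^ e) = ⟨(a : ZMod (4 * n)), (e : ZMod 2)⟩ := by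
  rw [map_mul, map_pow, map_pow, phi_x n hn, phi_y n hn, Cn.xpow, Cn.ypow, Cn.mul_def]
  congr 1
  · simp [Cn.u_zero]
  · simp

lemma x_pow_eq_one_iff (hn : 0 < n) (m : ℕ) : x n ^ m = 1 ↔ 4 * n ∣ m := by
  haveI : NeZero (4 * n) := ⟨by omega⟩
  constructor
  · intro h
    have h2 : phi n hn (x n ^ m * y n ^ 0) = phi n hn 1 := by rw [pow_zero, mul_one, h]
    rw [phi_form n hn, map_one, Cn.one_def] at h2
    have h3 : ((m : ℕ) : ZMod (4 * n)) = 0 := congrArg Cn.a h2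
    exact (ZMod.natCast_eq_zero_iff m (4 * n)).mp h3
  · rintro ⟨t, rfl⟩
    rw [pow_mul, x_pow_4n n, one_pow]

lemma order_x (hn : 0 < n) : orderOf (x n) = 4 * n :=
  Nat.dvd_antisymm (orderOf_dvd_of_pow_eq_one (x_pow_4n n))
    ((x_pow_eq_one_iff n hn _).mp (pow_orderOf_eq_one (x n)))

lemma finord_x (hn : 0 < n) : IsOfFinOrder (x n) :=
  isOfFinOrder_iff_pow_eq_one.mpr ⟨4 * n, by omega, x_pow_4n n⟩

lemma order_x_pow (hn : 0 < n) (a : ℕ) :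
    orderOf (x n ^ a) = 4 * n / Nat.gcd (4 * n) a := by
  rw [(finord_x n hn).orderOf_pow, order_x n hn]

lemma xay_ne_one (hn : 0 < n) (a : ℕ) : x n ^ a * y n ≠ 1 := by
  intro h
  have h2 : phi n hn (x n ^ a * y n ^ 1) = phi n hn 1 := by rw [pow_one, h]
  rw [phi_form n hn, map_one, Cn.one_def] at h2
  have h3 : ((1 : ℕ) : ZMod 2) = 0 := congrArg Cn.e h2
  simp at h3

lemma sq_xay (hn : 0 < n) (a : ℕ) : (x n ^ a * y n) ^ 2 = x n ^ (2 * n * a) := by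
  rw [sq, mul_assoc, ← mul_assoc (y n), y_x_pow n, mul_assoc, y_sq n, mul_one, ← pow_add]
  congr 1
  have h1 : 2 * n - 1 + 1 = 2 * n := by omega
  calc a + a * (2 * n - 1) = a * ((2 * n - 1) + 1) := by ring
  _ = 2 * n * a := by rw [h1]; ring

end Phi

/-! ### Further order facts -/

section More

variable (n : ℕ)

lemma x_2n_ne_one (hn : 0 < n) : x n ^ (2 * n) ≠ 1 := by
  intro h
  have h2 := (x_pow_eq_one_iff n hn _).mp h
  have := Nat.le_of_dvd (by omega) h2
  omega

lemma sq_xay_odd (hn : 0 < n) {a : ℕ} (ha : Odd a) : (x n ^ a * y n) ^ 2 = x n ^ (2 * n) := by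
  rw [sq_xay n hn]
  obtain ⟨t, ht⟩ := ha
  rw [pow_eq_pow_mod _ (x_pow_4n n)]
  congr 1
  rw [ht, show 2 * n * (2 * t + 1) = 2 * n + 4 * n * t by ring, Nat.add_mul_mod_self_left,
    Nat.mod_eq_of_lt (by omega)]

lemma orderOf_eq_four {H : Type*} [Group H] {g : H} (h4 : g ^ 4 = 1) (h2 : g ^ 2 ≠ 1) :
    orderOf g = 4 := by
  have := orderOf_eq_prime_pow (p := 2) (n := 1) (x := g) (by simpa using h2) (by norm_num; exact h4)
  simpa using this

lemma order_xay_even (hn : 0 < n) {a : ℕ} (ha : Even a) : orderOf (x n ^ a * y n) = 2 := by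
  apply orderOf_eq_prime
  · obtain ⟨t, ht⟩ := ha
    rw [sq_xay n hn]
    exact (x_pow_eq_one_iff n hn _).mpr ⟨t, by rw [ht]; ring⟩
  · exact xay_ne_one n hn a

lemma order_xay_odd (hn : 0 < n) {a : ℕ} (ha : Odd a) : orderOf (x n ^ a * y n) = 4 := by
  apply orderOf_eq_four
  · rw [show (4 : ℕ) = 2 * 2 by norm_num, pow_mul, sq_xay_odd n hn ha, ← pow_mul]
    exact (x_pow_eq_one_iff n hn _).mpr ⟨1, by ring⟩
  · rw [sq_xay_odd n hn ha]
    exact x_2n_ne_one n hn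

lemma pow4_xay (hn : 0 < n) (a : ℕ) : (x n ^ a * y n) ^ 4 = 1 := by
  rw [show (4 : ℕ) = 2 * 2 by norm_num, pow_mul, sq_xay n hn, ← pow_mul]
  exact (x_pow_eq_one_iff n hn _).mpr ⟨a, by ring⟩

lemma normal_form' (hn : 0 < n) (g : G n) :
    ∃ a e : ℕ, a < 4 * n ∧ e < 2 ∧ g = x n ^ a * y n ^ e := by
  obtain ⟨a, e, rfl⟩ := normal_form n hn g
  refine ⟨a % (4 * n), e % 2, Nat.mod_lt _ (by omega), Nat.mod_lt _ (by omega), ?_⟩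
  rw [pow_eq_pow_mod a (x_pow_4n n), pow_eq_pow_mod e (by rw [sq]; exact y_sq n)]

lemma gcd_shift (hn : 0 < n) {r : ℕ} (hr : Nat.gcd r (4 * n) = 1) :
    Nat.gcd (4 * n) (2 * n + r) = 1 := by
  set d := Nat.gcd (4 * n) (2 * n + r) with hd
  have hd1 : d ∣ 4 * n := Nat.gcd_dvd_left _ _
  have hd2 : d ∣ 2 * n + r := Nat.gcd_dvd_right _ _
  have hodd : ¬ (2 ∣ d) := by
    intro h
    have h1 : 2 ∣ 2 * n + r := h.trans hd2
    have h2 : (2 : ℕ) ∣ r := by omega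
    have h3 : (2 : ℕ) ∣ Nat.gcd r (4 * n) := Nat.dvd_gcd h2 ⟨2 * n, by ring⟩
    rw [hr] at h3
    norm_num at h3
  have hc2 : Nat.Coprime d 2 := by
    have h2' : Nat.gcd d 2 ∣ 2 := Nat.gcd_dvd_right _ _
    rcases (Nat.dvd_prime Nat.prime_two).mp h2' with h | h
    · exact h
    · exact absurd (h ▸ Nat.gcd_dvd_left d 2) hodd
  have hc4 : Nat.Coprime d 4 := by
    rw [show (4 : ℕ) = 2 * 2 by norm_num]
    exact Nat.Coprime.mul_right hc2 hc2
  have hdn : d ∣ n := hc4.dvd_of_dvd_mul_left hd1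
  have hdr : d ∣ r := by
    have := Nat.dvd_sub hd2 (hdn.mul_left 2)
    simpa using this
  have hfin : d ∣ 1 := hr ▸ Nat.dvd_gcd hdr hd1
  exact Nat.dvd_one.mp hfin

lemma tri_rel_prod : b₁ n * b₂ n * b₃ n = 1 := by
  have hmem : (FreeGroup.of 0 * FreeGroup.of 1 * FreeGroup.of 2 : FreeGroup (Fin 3)) ∈
      triRel n := by simp [triRel]
  have h := (QuotientGroup.eq_one_iff
      (FreeGroup.of 0 * FreeGroup.of 1 * FreeGroup.of 2 : FreeGroup (Fin 3))).mpr
    (Subgroup.subset_normalClosure hmem)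
  exact h

end More

theorem stmt16 (n : ℕ) (hn : 2 ≤ n) :
    (∀ k r : ℕ, k < 4 * n → Even k → r < 4 * n → Nat.gcd r (4 * n) = 1 →
      ∃ θ : Tri n →* G n, Function.Surjective θ ∧
        θ (b₁ n) = x n ^ k * y n ∧
        θ (b₂ n) = y n * (x n ^ (k + r))⁻¹ ∧
        θ (b₃ n) = x n ^ r ∧
        orderOf (θ (b₁ n)) = 2 ∧ orderOf (θ (b₂ n)) = 4 ∧ orderOf (θ (b₃ n)) = 4 * n) ∧
    (∀ θ : Tri n →* G n, Function.Surjective θ →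
      orderOf (θ (b₁ n)) = 2 → orderOf (θ (b₂ n)) = 4 → orderOf (θ (b₃ n)) = 4 * n →
      ∃ k r : ℕ, k < 4 * n ∧ Even k ∧ r < 4 * n ∧ Nat.gcd r (4 * n) = 1 ∧
        θ (b₁ n) = x n ^ k * y n ∧
        θ (b₂ n) = y n * (x n ^ (k + r))⁻¹ ∧
        θ (b₃ n) = x n ^ r) := by
  have h0 : 0 < n := by omega
  constructor
  · -- Part 1: construction
    intro k r hk hke hr hgcd
    have hrodd : ¬ (2 ∣ r) := by
      intro h2r
      have : (2 : ℕ) ∣ Nat.gcd r (4 * n) := Nat.dvd_gcd h2r ⟨2 * n, by ring⟩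
      rw [hgcd] at this
      norm_num at this
    -- the second generator image in normal form
    set M : ℕ := (k + r) * (4 * n - 1) * (2 * n - 1) with hM
    have hModd : Odd M := by
      have h1 : Odd (k + r) := by
        rw [Nat.odd_iff]
        obtain ⟨t, ht⟩ := hke
        omega
      have h2 : Odd (4 * n - 1) := by rw [Nat.odd_iff]; omega
      have h3 : Odd (2 * n - 1) := by rw [Nat.odd_iff]; omega
      exact (h1.mul h2).mul h3
    have hform : y n * (x n ^ (k + r))⁻¹ = x n ^ M * y n := by
      rw [inv_x_pow n h0, y_x_pow n, hM]
    set f : Fin 3 → G n := ![x n ^ k * y n, y n * (x n ^ (k + r))⁻¹, x n ^ r] with hf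
    have e0 : FreeGroup.lift f (FreeGroup.of 0) = x n ^ k * y n := by
      rw [FreeGroup.lift_apply_of]; rfl
    have e1 : FreeGroup.lift f (FreeGroup.of 1) = y n * (x n ^ (k + r))⁻¹ := by
      rw [FreeGroup.lift_apply_of]; rfl
    have e2 : FreeGroup.lift f (FreeGroup.of 2) = x n ^ r := by
      rw [FreeGroup.lift_apply_of]; rfl
    have hrels : ∀ w ∈ triRel n, FreeGroup.lift f w = 1 := by
      intro w hw
      rcases hw with rfl | rfl | rfl | rfl
      · rw [map_pow, e0]
        obtain ⟨t, ht⟩ := hke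
        rw [sq_xay n h0]
        exact (x_pow_eq_one_iff n h0 _).mpr ⟨t, by rw [ht]; ring⟩
      · rw [map_pow, e1, hform]
        exact pow4_xay n h0 M
      · rw [map_pow, e2, ← pow_mul]
        exact (x_pow_eq_one_iff n h0 _).mpr ⟨r, by ring⟩
      · rw [map_mul, map_mul, e0, e1, e2]
        have hstep : (x n ^ k * y n) * (y n * (x n ^ (k + r))⁻¹) * x n ^ r
            = x n ^ k * (y n * y n) * ((x n ^ (k + r))⁻¹ * x n ^ r) := by group
        rw [hstep, y_sq n, mul_one, pow_add]
        group
    set θ0 : Tri n →* G n := PresentedGroup.toGroup hrels with hθ0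
    have hb1 : θ0 (b₁ n) = x n ^ k * y n :=
      (PresentedGroup.toGroup.of hrels).trans (by rw [hf]; rfl)
    have hb2 : θ0 (b₂ n) = y n * (x n ^ (k + r))⁻¹ :=
      (PresentedGroup.toGroup.of hrels).trans (by rw [hf]; rfl)
    have hb3 : θ0 (b₃ n) = x n ^ r :=
      (PresentedGroup.toGroup.of hrels).trans (by rw [hf]; rfl)
    have hxmem : x n ∈ θ0.range := by
      have hxr : x n ^ r ∈ θ0.range := ⟨b₃ n, hb3⟩
      obtain ⟨s, -, hs⟩ := Nat.exists_mul_mod_eq_one_of_coprime hgcd (by omega)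
      have hpow : (x n ^ r) ^ s = x n := by
        rw [← pow_mul, pow_eq_pow_mod _ (x_pow_4n n), hs, pow_one]
      exact hpow ▸ pow_mem hxr s
    refine ⟨θ0, ?_, hb1, hb2, hb3, ?_, ?_, ?_⟩
    · rw [← MonoidHom.range_eq_top, eq_top_iff, ← closure_xy n, Subgroup.closure_le]
      rintro g (rfl | rfl)
      · exact hxmem
      · have hy : y n = (x n ^ k)⁻¹ * (x n ^ k * y n) := by group
        rw [hy]
        exact mul_mem (inv_mem (pow_mem hxmem k)) ⟨b₁ n, hb1⟩
    · rw [hb1]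
      exact order_xay_even n h0 hke
    · rw [hb2, hform]
      exact order_xay_odd n h0 hModd
    · rw [hb3, order_x_pow n h0, Nat.gcd_comm, hgcd, Nat.div_one]
  · -- Part 2: classification
    intro θ hsurj h1 h2 h3
    have hrel : θ (b₁ n) * θ (b₂ n) * θ (b₃ n) = 1 := by
      rw [← map_mul, ← map_mul, tri_rel_prod n, map_one]
    have hb2f : θ (b₂ n) = (θ (b₁ n))⁻¹ * (θ (b₃ n))⁻¹ := by
      apply mul_left_cancel (a := θ (b₁ n))
      apply mul_right_cancel (b := θ (b₃ n))
      rw [← mul_assoc, hrel]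
      group
    obtain ⟨a, e3, ha4, he3, hb3f⟩ := normal_form' n h0 (θ (b₃ n))
    interval_cases e3
    · -- e3 = 0 : θ b₃ = x ^ a
      rw [pow_zero, mul_one] at hb3f
      have hdvd : Nat.gcd (4 * n) a ∣ 4 * n := Nat.gcd_dvd_left _ _
      have heq : 4 * n / Nat.gcd (4 * n) a = 4 * n := by
        rw [← order_x_pow n h0, ← hb3f, h3]
      have hga : Nat.gcd (4 * n) a = 1 := by
        have hmul := Nat.div_mul_cancel hdvd
        rw [heq] at hmul
        exact Nat.eq_of_mul_eq_mul_left (show 0 < 4 * n by omega)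
          (hmul.trans (mul_one (4 * n)).symm)
      obtain ⟨k, e1, hk4, he1, hb1f⟩ := normal_form' n h0 (θ (b₁ n))
      interval_cases e1
      · -- e1 = 0 : θ b₁ = x ^ k, impossible
        exfalso
        rw [pow_zero, mul_one] at hb1f
        have heq2 : 4 * n / Nat.gcd (4 * n) k = 2 := by
          rw [← order_x_pow n h0, ← hb1f, h1]
        have hdvk : Nat.gcd (4 * n) k ∣ 4 * n := Nat.gcd_dvd_left _ _
        have hmul := Nat.div_mul_cancel hdvk
        rw [heq2] at hmul
        have hgk : Nat.gcd (4 * n) k = 2 * n := by omega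
        have h2nk : 2 * n ∣ k := hgk ▸ Nat.gcd_dvd_right (4 * n) k
        have hk0 : k = 0 ∨ k = 2 * n := by
          obtain ⟨c, hc⟩ := h2nk
          rcases c with _ | _ | c
          · left; omega
          · right; omega
          · exfalso
            have h22 : 2 * n * 2 ≤ 2 * n * (c + 1 + 1) := Nat.mul_le_mul_left (2 * n) (by omega)
            omega
        rcases hk0 with rfl | rfl
        · rw [hb1f, pow_zero, orderOf_one] at h1
          norm_num at h1
        · have hfour : orderOf (θ (b₂ n)) = 4 * n := by
            rw [hb2f, hb1f, hb3f, ← mul_inv_rev, ← pow_add, orderOf_inv, Nat.add_comm a (2 * n),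
              order_x_pow n h0, gcd_shift n h0 (by rwa [Nat.gcd_comm] at hga), Nat.div_one]
          rw [h2] at hfour
          omega
      · -- e1 = 1 : θ b₁ = x ^ k * y
        rw [pow_one] at hb1f
        have hsq : (x n ^ k * y n) ^ 2 = 1 := by
          rw [← hb1f, ← h1]; exact pow_orderOf_eq_one _
        rw [sq_xay n h0] at hsq
        obtain ⟨t, ht⟩ := (x_pow_eq_one_iff n h0 _).mp hsq
        have hkt : k = 2 * t :=
          Nat.eq_of_mul_eq_mul_left (show 0 < 2 * n by omega)
            (by rw [ht]; ring)
        refine ⟨k, a, hk4, ⟨t, by omega⟩, ha4, by rwa [Nat.gcd_comm] at hga, hb1f, ?_, hb3f⟩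
        rw [hb2f, hb1f, hb3f, mul_inv_rev, y_inv n, mul_assoc, ← mul_inv_rev, ← pow_add,
          Nat.add_comm a k]
    · -- e3 = 1 : impossible
      exfalso
      rw [pow_one] at hb3f
      have h4 : θ (b₃ n) ^ 4 = 1 := by rw [hb3f]; exact pow4_xay n h0 a
      have hdd := orderOf_dvd_of_pow_eq_one h4
      rw [h3] at hdd
      have := Nat.le_of_dvd (by norm_num) hdd
      omega
end

section
/- Let η = (1,2,…,4n)(4n+1,…,8n) in the symmetric group S_{8n} and let σ be the involution defined in blocks as σ = ∏_{k=1}^{2n}(k, 8n-((1-j)2n+(k-1))) ∏_{k=2n+1}^{4n}(k, 8n-((j-1)2n+(k-1))) where k = 2l + j with j ∈ {0,1}. Then η^{4n} = σ² = 1, σησ = η^{2n-1}, and the subgroup ⟨η, σ⟩ of S_{8n} is isomorphic to G_n via η ↦ x, σ ↦ y. -/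
namespace Stmt17Aux

def ef (n v : ℕ) : ℕ := if v + 1 = 4*n then 0 else if v + 1 = 8*n then 4*n else v + 1

def eg (n v : ℕ) : ℕ := if v = 0 then 4*n - 1 else if v = 4*n then 8*n - 1 else v - 1

def sf (n v : ℕ) : ℕ :=
  if v < 4*n then
    (if v % 2 = 0 then 8*n - 1 - v else if v < 2*n then 6*n - 1 - v else 10*n - 1 - v)
  else
    (if v % 2 = 1 then 8*n - 1 - v else if v < 6*n then 6*n - 1 - v else 10*n - 1 - v)

theorem ef_cases (n v : ℕ) :
    (v + 1 = 4*n ∧ ef n v = 0) ∨ (v + 1 ≠ 4*n ∧ v + 1 = 8*n ∧ ef n v = 4*n) ∨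
    (v + 1 ≠ 4*n ∧ v + 1 ≠ 8*n ∧ ef n v = v + 1) := by
  unfold ef; split_ifs <;> omega

theorem eg_cases (n v : ℕ) :
    (v = 0 ∧ eg n v = 4*n - 1) ∨ (v ≠ 0 ∧ v = 4*n ∧ eg n v = 8*n - 1) ∨
    (v ≠ 0 ∧ v ≠ 4*n ∧ eg n v = v - 1) := by
  unfold eg; split_ifs <;> omega

theorem sf_cases (n v : ℕ) :
    (v < 4*n ∧ v % 2 = 0 ∧ sf n v = 8*n - 1 - v) ∨
    (v < 2*n ∧ v % 2 = 1 ∧ sf n v = 6*n - 1 - v) ∨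
    (2*n ≤ v ∧ v < 4*n ∧ v % 2 = 1 ∧ sf n v = 10*n - 1 - v) ∨
    (4*n ≤ v ∧ v % 2 = 1 ∧ sf n v = 8*n - 1 - v) ∨
    (4*n ≤ v ∧ v < 6*n ∧ v % 2 = 0 ∧ sf n v = 6*n - 1 - v) ∨
    (6*n ≤ v ∧ v % 2 = 0 ∧ sf n v = 10*n - 1 - v) := by
  unfold sf; split_ifs <;> omega

theorem ef_lt {n v : ℕ} (hn : 1 ≤ n) (hv : v < 8*n) : ef n v < 8*n := by
  have := ef_cases n v; omega

theorem eg_lt {n v : ℕ} (hn : 1 ≤ n) (hv : v < 8*n) : eg n v < 8*n := by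
  have := eg_cases n v; omega

theorem sf_lt {n v : ℕ} (hn : 1 ≤ n) (hv : v < 8*n) : sf n v < 8*n := by
  have := sf_cases n v; omega

theorem eg_ef {n v : ℕ} (hn : 1 ≤ n) (hv : v < 8*n) : eg n (ef n v) = v := by
  have h1 := ef_cases n v; have h2 := eg_cases n (ef n v); omega

theorem ef_eg {n v : ℕ} (hn : 1 ≤ n) (hv : v < 8*n) : ef n (eg n v) = v := by
  have h1 := eg_cases n v; have h2 := ef_cases n (eg n v); omega

theorem sf_sf {n v : ℕ} (hn : 1 ≤ n) (hv : v < 8*n) : sf n (sf n v) = v := by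
  have h1 := sf_cases n v; have h2 := sf_cases n (sf n v); omega

theorem mod4 {n v : ℕ} (hn : 1 ≤ n) (hv : v ≤ 8*n) :
    v % (4*n) = if v < 4*n then v else (if v = 8*n then 0 else v - 4*n) := by
  split_ifs with h1 h2
  · exact Nat.mod_eq_of_lt h1
  · rw [h2, show 8*n = 4*n*2 by ring, Nat.mul_mod_right]
  · rw [Nat.mod_eq_sub_mod (by omega), Nat.mod_eq_of_lt (by omega)]

theorem ef_spec {n v : ℕ} (hn : 1 ≤ n) (hv : v < 8*n) :
    ef n v = if v < 4*n then (v + 1) % (4*n) else 4*n + ((v + 1 - 4*n) % (4*n)) := by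
  have h1 := ef_cases n v
  split_ifs with h
  · rw [mod4 hn (by omega)]; split_ifs <;> omega
  · rw [mod4 hn (by omega)]; split_ifs <;> omega

theorem conj_nat {n v : ℕ} (hn : 2 ≤ n) (hv : v < 8*n) :
    ef n (sf n v) = sf n (if v < 4*n
      then (if v + (2*n-1) < 4*n then v + (2*n-1) else v + (2*n-1) - 4*n)
      else 4*n + (if v + (2*n-1) - 4*n < 4*n then v + (2*n-1) - 4*n else v + (2*n-1) - 4*n - 4*n)) := by
  have h1 := sf_cases n v
  have h2 := ef_cases n (sf n v)
  split_ifs with h3 h4 h5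
  · have h6 := sf_cases n (v + (2*n-1)); omega
  · have h6 := sf_cases n (v + (2*n-1) - 4*n); omega
  · have h6 := sf_cases n (4*n + (v + (2*n-1) - 4*n)); omega
  · have h6 := sf_cases n (4*n + (v + (2*n-1) - 4*n - 4*n)); omega

variable {n : ℕ}

/-- the permutation η -/
def eta (hn : 1 ≤ n) : Equiv.Perm (Fin (8*n)) where
  toFun i := ⟨ef n i, ef_lt hn i.isLt⟩
  invFun i := ⟨eg n i, eg_lt hn i.isLt⟩
  left_inv i := Fin.ext (eg_ef hn i.isLt)
  right_inv i := Fin.ext (ef_eg hn i.isLt)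

/-- the permutation σ -/
def sigma' (hn : 1 ≤ n) : Equiv.Perm (Fin (8*n)) where
  toFun i := ⟨sf n i, sf_lt hn i.isLt⟩
  invFun i := ⟨sf n i, sf_lt hn i.isLt⟩
  left_inv i := Fin.ext (sf_sf hn i.isLt)
  right_inv i := Fin.ext (sf_sf hn i.isLt)

theorem eta_val (hn : 1 ≤ n) (i : Fin (8*n)) : (eta hn i : ℕ) = ef n i := rfl
theorem sigma'_val (hn : 1 ≤ n) (i : Fin (8*n)) : (sigma' hn i : ℕ) = sf n i := rfl

theorem eta_pow_val (hn : 1 ≤ n) (a : ℕ) (i : Fin (8*n)) :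
    (((eta hn)^a) i : ℕ) = if (i:ℕ) < 4*n then ((i:ℕ) + a) % (4*n)
      else 4*n + (((i:ℕ) + a - 4*n) % (4*n)) := by
  induction a with
  | zero =>
    rw [pow_zero, Equiv.Perm.one_apply]
    split_ifs with h
    · rw [Nat.add_zero, Nat.mod_eq_of_lt h]
    · rw [Nat.add_zero, Nat.mod_eq_of_lt (by omega)]
      omega
  | succ a ih =>
    rw [pow_succ', Equiv.Perm.mul_apply, eta_val, ef_spec hn (Fin.isLt _), ih]
    by_cases h : (i:ℕ) < 4*n
    · rw [if_pos h, if_pos h, if_pos (Nat.mod_lt _ (by omega)), Nat.mod_add_mod, ← Nat.add_assoc]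
    · rw [if_neg h, if_neg h, if_neg (by omega)]
      congr 1
      rw [show 4*n + (((i:ℕ) + a - 4*n) % (4*n)) + 1 - 4*n = ((i:ℕ) + a - 4*n) % (4*n) + 1 by omega,
        Nat.mod_add_mod]
      congr 1
      omega

theorem eta_pow_4n (hn : 1 ≤ n) : (eta hn)^(4*n) = 1 := by
  ext i
  rw [eta_pow_val hn, Equiv.Perm.one_apply]
  have hi := i.isLt
  split_ifs with h
  · rw [Nat.add_mod_right, Nat.mod_eq_of_lt h]
  · rw [Nat.add_sub_cancel, mod4 hn (by omega)]
    split_ifs <;> omega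

theorem sigma'_sq (hn : 1 ≤ n) : (sigma' hn)^2 = 1 := by
  ext i
  rw [sq, Equiv.Perm.mul_apply, Equiv.Perm.one_apply, sigma'_val, sigma'_val, sf_sf hn i.isLt]

theorem eta_mul_sigma' (hn : 2 ≤ n) :
    (eta (by omega : 1 ≤ n)) * (sigma' (by omega : 1 ≤ n))
      = (sigma' (by omega)) * (eta (by omega))^(2*n-1) := by
  ext i
  rw [Equiv.Perm.mul_apply, Equiv.Perm.mul_apply, eta_val, sigma'_val, sigma'_val,
    eta_pow_val _ (2*n-1) i]
  have hi := i.isLt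
  rw [conj_nat hn i.isLt]
  congr 1
  by_cases h : (i:ℕ) < 4*n
  · rw [if_pos h, if_pos h, mod4 (by omega) (by omega)]
    split_ifs <;> omega
  · rw [if_neg h, if_neg h, mod4 (by omega) (by omega)]
    split_ifs <;> omega

theorem sigma'_conj (hn : 2 ≤ n) :
    (sigma' (by omega : 1 ≤ n)) * (eta (by omega : 1 ≤ n)) * (sigma' (by omega))
      = (eta (by omega))^(2*n-1) := by
  have h2 : (sigma' (by omega : 1 ≤ n)) * (sigma' (by omega)) = 1 := by
    rw [← sq]; exact sigma'_sq (by omega)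
  rw [mul_assoc, eta_mul_sigma' hn, ← mul_assoc, h2, one_mul]

end Stmt17Aux



section
variable (n : ℕ)

theorem key (w : FreeGroup (Fin 2)) (hw : w ∈ qdRel n) : PresentedGroup.mk (qdRel n) w = 1 :=
  (QuotientGroup.eq_one_iff w).mpr (Subgroup.subset_normalClosure hw)

theorem hx4 : (x n)^(4*n) = 1 := by
  have h := key n _ (Set.mem_insert _ _)
  rw [map_pow] at h
  exact h

theorem hy2 : (y n)^2 = 1 := by
  have h := key n _ (Set.mem_insert_of_mem _ (Set.mem_insert _ _))
  rw [map_pow] at h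
  exact h

theorem hyxy : (y n) * (x n) * (y n) = (x n)^(2*n-1) := by
  have h := key n _ (Set.mem_insert_of_mem _ (Set.mem_insert_of_mem _ rfl))
  rw [map_mul, map_mul, map_inv, map_pow, mul_inv_eq_one] at h
  exact h

theorem hyy : (y n) * (y n) = 1 := by rw [← sq]; exact hy2 n

theorem hyx : (y n) * (x n) = (x n)^(2*n-1) * (y n) := by
  calc (y n) * (x n) = ((y n) * (x n) * (y n)) * (y n) := by
        rw [mul_assoc, hyy, mul_one]
    _ = (x n)^(2*n-1) * (y n) := by rw [hyxy]

theorem hyxc (c : ℕ) : (y n) * (x n)^c = (x n)^((2*n-1)*c) * (y n) := by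
  induction c with
  | zero => simp
  | succ c ih =>
    rw [pow_succ, ← mul_assoc, ih, mul_assoc, hyx, ← mul_assoc, ← pow_add, Nat.mul_succ]

theorem hxmod (hn : 1 ≤ n) (a : ℕ) : (x n)^a = (x n)^(a % (4*n)) := by
  conv_lhs => rw [← Nat.div_add_mod a (4*n)]
  rw [pow_add, pow_mul, hx4, one_pow, one_mul]

theorem hxinv' (hn : 1 ≤ n) (a : ℕ) : ((x n)^a)⁻¹ = (x n)^((4*n-1)*a) := by
  refine inv_eq_of_mul_eq_one_right ?_
  have h1 : a ≤ 4*n*a := Nat.le_mul_of_pos_left a (by omega)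
  have h2 : a + (4*n-1)*a = 4*n*a := by rw [Nat.sub_mul]; omega
  rw [← pow_add, h2, pow_mul, hx4, one_pow]

theorem main_form (hn : 1 ≤ n) (g : G n) : ∃ a b : ℕ, b < 2 ∧ g = (x n)^a * (y n)^b := by
  have hg : g ∈ Subgroup.closure (Set.range (PresentedGroup.of : Fin 2 → PresentedGroup (qdRel n))) := by
    rw [PresentedGroup.closure_range_of]; trivial
  refine Subgroup.closure_induction ?_ ?_ ?_ ?_ hg
  · rintro g ⟨i, rfl⟩
    fin_cases i
    · exact ⟨1, 0, by omega, by simp [x]; exact (pow_one _).symm⟩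
    · exact ⟨0, 1, by omega, by simp [y]; exact (pow_one _).symm⟩
  · exact ⟨0, 0, by omega, by simp⟩
  · rintro g₁ g₂ _ _ ⟨a, b, hb, rfl⟩ ⟨c, d, hd, rfl⟩
    interval_cases b
    · exact ⟨a + c, d, hd, by rw [pow_zero, mul_one, ← mul_assoc, ← pow_add]⟩
    · interval_cases d
      · refine ⟨a + (2*n-1)*c, 1, by omega, ?_⟩
        rw [pow_one, pow_zero, mul_one, pow_add, mul_assoc, mul_assoc, ← hyxc, ← mul_assoc]
      · refine ⟨a + (2*n-1)*c, 0, by omega, ?_⟩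
        rw [pow_one, pow_zero, mul_one, pow_add]
        calc (x n)^a * (y n) * ((x n)^c * (y n))
            = (x n)^a * ((y n) * (x n)^c) * (y n) := by group
          _ = (x n)^a * ((x n)^((2*n-1)*c) * (y n)) * (y n) := by rw [hyxc]
          _ = (x n)^a * (x n)^((2*n-1)*c) * ((y n) * (y n)) := by group
          _ = (x n)^a * (x n)^((2*n-1)*c) := by rw [hyy, mul_one]
  · rintro g _ ⟨a, b, hb, rfl⟩
    interval_cases b
    · refine ⟨(4*n-1)*a, 0, by omega, ?_⟩
      rw [pow_zero, mul_one, mul_one, hxinv' n hn]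
    · refine ⟨(2*n-1)*((4*n-1)*a), 1, by omega, ?_⟩
      rw [pow_one, mul_inv_rev, hxinv' n hn]
      have hyinv : (y n)⁻¹ = y n := inv_eq_of_mul_eq_one_right (hyy n)
      rw [hyinv, hyxc]

theorem fsurj (hn : 1 ≤ n) :
    Function.Surjective (fun p : Fin (4*n) × Fin 2 => (x n)^(p.1 : ℕ) * (y n)^(p.2 : ℕ)) := by
  intro g
  obtain ⟨a, b, hb, rfl⟩ := main_form n hn g
  refine ⟨(⟨a % (4*n), Nat.mod_lt _ (by omega)⟩, ⟨b, hb⟩), ?_⟩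
  simp only
  rw [← hxmod n hn]

end

open Stmt17Aux in
theorem stmt17 (n : ℕ) (hn : 2 ≤ n) :
    ∃ η σ : Equiv.Perm (Fin (8 * n)),
      (∀ i : Fin (8 * n),
        ((η i : ℕ) = if (i : ℕ) < 4 * n then ((i : ℕ) + 1) % (4 * n)
          else 4 * n + (((i : ℕ) + 1 - 4 * n) % (4 * n)))) ∧
      (∀ i : Fin (8 * n), (i : ℕ) < 4 * n →
        ((σ i : ℕ) = if (i : ℕ) % 2 = 0 then 8 * n - 1 - (i : ℕ)
          else if (i : ℕ) < 2 * n then 6 * n - 1 - (i : ℕ)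
          else 10 * n - 1 - (i : ℕ))) ∧
      η ^ (4 * n) = 1 ∧ σ ^ 2 = 1 ∧ σ * η * σ = η ^ (2 * n - 1) ∧
      ∃ φ : G n →* Equiv.Perm (Fin (8 * n)),
        Function.Injective φ ∧ φ (x n) = η ∧ φ (y n) = σ := by
  have hn1 : 1 ≤ n := by omega
  refine ⟨eta hn1, sigma' hn1, ?_, ?_, eta_pow_4n hn1, sigma'_sq hn1, sigma'_conj hn, ?_⟩
  · intro i
    rw [eta_val, ef_spec hn1 i.isLt]
  · intro i hi
    rw [sigma'_val]
    unfold sf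
    rw [if_pos hi]
  · -- the homomorphism
    have hrel : ∀ r ∈ qdRel n,
        FreeGroup.lift (fun j : Fin 2 => if j = 0 then eta hn1 else sigma' hn1) r = 1 := by
      intro r hr
      simp only [qdRel, Set.mem_insert_iff, Set.mem_singleton_iff] at hr
      rcases hr with h | h | h
      · rw [h, map_pow, FreeGroup.lift_apply_of, if_pos rfl, eta_pow_4n hn1]
      · rw [h, map_pow, FreeGroup.lift_apply_of, if_neg (by decide), sigma'_sq hn1]
      · rw [h, map_mul, map_mul, map_inv, map_pow, FreeGroup.lift_apply_of, FreeGroup.lift_apply_of,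
          if_pos rfl, if_neg (by decide), mul_inv_eq_one]
        exact sigma'_conj hn
    set φ : G n →* Equiv.Perm (Fin (8*n)) := PresentedGroup.toGroup hrel with hφdef
    have hφx : φ (x n) = eta hn1 := by
      show (PresentedGroup.toGroup hrel) (PresentedGroup.of 0) = eta hn1
      rw [PresentedGroup.toGroup.of, if_pos rfl]
    have hφy : φ (y n) = sigma' hn1 := by
      show (PresentedGroup.toGroup hrel) (PresentedGroup.of 1) = sigma' hn1
      rw [PresentedGroup.toGroup.of, if_neg (by decide)]
    refine ⟨φ, ?_, hφx, hφy⟩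
    -- injectivity
    haveI hfin : Finite (G n) := Finite.of_surjective _ (fsurj n hn1)
    have hcardle : Nat.card (G n) ≤ 8*n := by
      have h := Nat.card_le_card_of_surjective _ (fsurj n hn1)
      have h2 : Nat.card (Fin (4*n) × Fin 2) = 8*n := by
        simp [Nat.card_prod]; ring
      omega
    have hz0 : (0 : ℕ) < 8*n := by omega
    set z0 : Fin (8*n) := ⟨0, hz0⟩ with hz0def
    have hval0 : ∀ a : ℕ, a < 4*n → (((eta hn1)^a) z0 : ℕ) = a := by
      intro a ha
      rw [eta_pow_val hn1]
      rw [show ((z0 : Fin (8*n)) : ℕ) = 0 from rfl, if_pos (by omega), Nat.zero_add,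
        Nat.mod_eq_of_lt ha]
    have hσ0 : ((sigma' hn1) z0 : ℕ) = 8*n - 1 := by
      rw [sigma'_val]
      have := sf_cases n 0
      have h0 : ((z0 : Fin (8*n)) : ℕ) = 0 := rfl
      rw [h0]
      omega
    have hgeval : ∀ a : ℕ, 4*n ≤ (((eta hn1)^a) ((sigma' hn1) z0) : ℕ) := by
      intro a
      rw [eta_pow_val hn1, hσ0, if_neg (by omega)]
      exact Nat.le_add_right _ _
    have hginj : Function.Injective (fun p : Fin (4*n) × Fin 2 =>
        ((⟨(eta hn1)^((p.1 : ℕ)) * (sigma' hn1)^((p.2 : ℕ)),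
          ⟨(x n)^((p.1 : ℕ)) * (y n)^((p.2 : ℕ)),
            by rw [map_mul, map_pow, map_pow, hφx, hφy]⟩⟩ : φ.range))) := by
      rintro ⟨a, b⟩ ⟨c, d⟩ h
      simp only [Subtype.mk.injEq] at h
      have hb : (b:ℕ) = 0 ∨ (b:ℕ) = 1 := by omega
      have hd : (d:ℕ) = 0 ∨ (d:ℕ) = 1 := by omega
      have key1 : ∀ {a c : Fin (4*n)}, (eta hn1)^((a:ℕ)) = (eta hn1)^((c:ℕ)) → a = c := by
        intro a c hac
        have h0 : (((eta hn1)^((a:ℕ))) z0 : ℕ) = (((eta hn1)^((c:ℕ))) z0 : ℕ) := by rw [hac]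
        rw [hval0 _ a.isLt, hval0 _ c.isLt] at h0
        exact Fin.ext h0
      have mixed : ∀ {a c : Fin (4*n)},
          (eta hn1)^((a:ℕ)) ≠ (eta hn1)^((c:ℕ)) * sigma' hn1 := by
        intro a c hac
        have h0 : (((eta hn1)^((a:ℕ))) z0 : ℕ)
            = (((eta hn1)^((c:ℕ)) * sigma' hn1) z0 : ℕ) := by rw [hac]
        rw [Equiv.Perm.mul_apply] at h0
        have h1 := hgeval ((c:ℕ))
        rw [hval0 _ a.isLt] at h0
        have h2 := a.isLt
        omega
      simp only [Prod.mk.injEq]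
      rcases hb with hb | hb <;> rcases hd with hd | hd <;> rw [hb, hd] at h
      · simp only [pow_zero, mul_one] at h
        exact ⟨key1 (congrArg Subtype.val h), Fin.ext (by omega)⟩
      · simp only [pow_zero, pow_one, mul_one] at h
        exact absurd (congrArg Subtype.val h) mixed
      · simp only [pow_zero, pow_one, mul_one] at h
        exact absurd (congrArg Subtype.val h).symm mixed
      · simp only [pow_one] at h
        exact ⟨key1 (mul_right_cancel (congrArg Subtype.val h : (eta hn1)^((a:ℕ)) * sigma' hn1 = (eta hn1)^((c:ℕ)) * sigma' hn1)), Fin.ext (by omega)⟩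
    have hrange : 8*n ≤ Nat.card φ.range := by
      have h := Nat.card_le_card_of_injective _ hginj
      have h2 : Nat.card (Fin (4*n) × Fin 2) = 8*n := by
        simp [Nat.card_prod]; ring
      omega
    have hquot : Nat.card (G n ⧸ φ.ker) = Nat.card φ.range :=
      Nat.card_congr (QuotientGroup.quotientKerEquivRange φ).toEquiv
    have hcard : Nat.card (G n) = Nat.card (G n ⧸ φ.ker) * Nat.card φ.ker :=
      Subgroup.card_eq_card_quotient_mul_card_subgroup φ.ker
    have hkpos : 1 ≤ Nat.card φ.ker := Nat.card_pos
    have hker1 : Nat.card φ.ker ≤ 1 := by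
      by_contra hc
      push_neg at hc
      have h4 : 8*n * 2 ≤ Nat.card (G n ⧸ φ.ker) * Nat.card φ.ker :=
        Nat.mul_le_mul (by omega) (by omega)
      omega
    exact (MonoidHom.ker_eq_bot_iff φ).mp (Subgroup.eq_bot_of_card_le φ.ker hker1)
end
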